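/- arXiv:1702.06904 — 9 statements merged into one kernel-verified Lean document; each statement's English description precedes it below -/
import Mathlib

section
/- Let s = (s_k) be a sequence of real numbers. If sup over all pairs of integers n > ℓ ≥ 0 of ( (1/(n-ℓ)) ∑_{k=ℓ}^{n-1} e^{2 s_k} ) · ( (1/(n-ℓ)) ∑_{k=ℓ}^{n-1} e^{-2 s_k} ) is finite, then s has bounded mean oscillation: sup over n > ℓ ≥ 0 of (1/(n-ℓ)) ∑_{k=ℓ}^{n-1} |s_k − ⟨s⟩_{n,ℓ}| is finite, where ⟨s⟩_{n,ℓ} = (1/(n-ℓ)) ∑_{k=ℓ}^{n-1} s_k. -/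
open Finset Real
open scoped BigOperators

/-!
Write `a` for the mean of `s` on an interval. By Jensen's inequality for `exp`, `e^{2a}` and
`e^{-2a}` are bounded by the means of `e^{2s}` and `e^{-2s}`. Applying `|x| ≤ cosh 2x` to
`x = s k - a` and averaging, the mean oscillation is at most
`(e^{-2a} ⟨e^{2s}⟩ + e^{2a} ⟨e^{-2s}⟩) / 2 ≤ ⟨e^{2s}⟩ ⟨e^{-2s}⟩`.
-/

theorem ConvexOn.map_expect_le {ι : Type*} {s : Set ℝ} {g : ℝ → ℝ} (hg : ConvexOn ℝ s g)
    {t : Finset ι} (ht : t.Nonempty) {p : ι → ℝ} (hp : ∀ i ∈ t, p i ∈ s) :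
    g (𝔼 i ∈ t, p i) ≤ 𝔼 i ∈ t, g (p i) := by
  have hw : ∑ _i ∈ t, (#t : ℝ)⁻¹ = 1 := by
    rw [sum_const, nsmul_eq_mul, mul_inv_cancel₀ (by exact_mod_cast ht.card_ne_zero)]
  simpa [expect_eq_sum_div_card, sum_div, div_eq_inv_mul, mul_sum] using
    hg.map_sum_le (fun _ _ => by positivity) hw hp

theorem abs_le_cosh_two_mul (x : ℝ) : |x| ≤ cosh (2 * x) := by
  rw [cosh_eq, abs_le]
  constructor <;>
    linarith [add_one_le_exp (2 * x), add_one_le_exp (-(2 * x)), exp_pos (2 * x),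
      exp_pos (-(2 * x))]

theorem expect_abs_sub_expect_le_expect_exp_mul_expect_exp {ι : Type*} {t : Finset ι}
    (ht : t.Nonempty) (f : ι → ℝ) :
    𝔼 i ∈ t, |f i - 𝔼 j ∈ t, f j| ≤
      (𝔼 i ∈ t, exp (2 * f i)) * 𝔼 i ∈ t, exp (-2 * f i) := by
  set a := 𝔼 j ∈ t, f j
  set A := 𝔼 i ∈ t, exp (2 * f i)
  set B := 𝔼 i ∈ t, exp (-2 * f i)
  have hA : exp (𝔼 i ∈ t, 2 * f i) ≤ A :=
    convexOn_exp.map_expect_le ht fun _ _ => Set.mem_univ _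
  have hB : exp (𝔼 i ∈ t, -2 * f i) ≤ B :=
    convexOn_exp.map_expect_le ht fun _ _ => Set.mem_univ _
  rw [← mul_expect] at hA hB
  have hpoint : ∀ i,
      |f i - a| ≤ (exp (-2 * a) * exp (2 * f i) + exp (2 * a) * exp (-2 * f i)) / 2 := by
    intro i
    calc |f i - a| ≤ cosh (2 * (f i - a)) := abs_le_cosh_two_mul _
      _ = _ := by rw [cosh_eq, ← exp_add, ← exp_add]; ring_nf
  calc 𝔼 i ∈ t, |f i - a|
      ≤ 𝔼 i ∈ t, (exp (-2 * a) * exp (2 * f i) + exp (2 * a) * exp (-2 * f i)) / 2 :=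
        expect_le_expect fun i _ => hpoint i
    _ = (exp (-2 * a) * A + exp (2 * a) * B) / 2 := by
        rw [← expect_div, expect_add_distrib, ← mul_expect, ← mul_expect]
    _ ≤ (B * A + A * B) / 2 := by gcongr
    _ = A * B := by ring

theorem one_div_sub_mul_sum_Ico_eq_expect (f : ℕ → ℝ) (ℓ n : ℕ) :
    1 / ((n : ℝ) - ℓ) * ∑ k ∈ Ico ℓ n, f k = 𝔼 k ∈ Ico ℓ n, f k := by
  rcases le_or_gt n ℓ with hnl | hln
  · simp [Ico_eq_empty_of_le hnl]
  · rw [expect_eq_sum_div_card, Nat.card_Ico, Nat.cast_sub hln.le]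
    ring

theorem bmo_of_discrete_muckenhoupt (s : ℕ → ℝ)
    (h : ∃ C : ℝ, ∀ ℓ n : ℕ, ℓ < n →
      ((1 / ((n : ℝ) - ℓ)) * ∑ k ∈ Finset.Ico ℓ n, Real.exp (2 * s k)) *
        ((1 / ((n : ℝ) - ℓ)) * ∑ k ∈ Finset.Ico ℓ n, Real.exp (-2 * s k)) ≤ C) :
    ∃ C : ℝ, ∀ ℓ n : ℕ, ℓ < n →
      (1 / ((n : ℝ) - ℓ)) *
        ∑ k ∈ Finset.Ico ℓ n,
          |s k - (1 / ((n : ℝ) - ℓ)) * ∑ i ∈ Finset.Ico ℓ n, s i| ≤ C := by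
  obtain ⟨C, hC⟩ := h
  refine ⟨C, fun ℓ n hln => ?_⟩
  simp only [one_div_sub_mul_sum_Ico_eq_expect] at hC ⊢
  exact (expect_abs_sub_expect_le_expect_exp_mul_expect_exp (nonempty_Ico.2 hln) s).trans
    (hC ℓ n hln)
end

section
/- Define κ_j(r) = r!/(r−j)! for r ≥ j and κ_j(r) = 0 for r < j. There is a universal constant C such that for all integers n ≥ 1 and all integers j with 1 ≤ j ≤ n/2, letting n_j = ⌊(1 − 1/(j+1)) n⌋, one has κ_j(n)/κ_j(n_j) ≤ C. -/
/-!
Writing `m = ⌊n j / (j + 1)⌋`, the ratio `κ_j(n) / κ_j(m)` is the product of the `j` factors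
`(n - i) / (m - i) = 1 + (n - m) / (m - i) ≤ exp ((n - m) / (m - j + 1))`, so it is at most
`exp (j (n - m) / (m - j + 1))`. Since `n - m ≈ n / (j + 1)` and `m - j + 1 ≳ n / 2 - j`, the
exponent stays bounded (by `5`) as long as `2 j ≤ n`.
-/

open Real Finset

/-- `κ_j(r) = r!/(r−j)!` for `r ≥ j` and `κ_j(r) = 0` for `r < j`. -/
noncomputable def kappa (j r : ℕ) : ℝ :=
  if j ≤ r then (r.factorial : ℝ) / ((r - j).factorial : ℝ) else 0

lemma kappa_eq_descFactorial {j r : ℕ} (h : j ≤ r) : kappa j r = r.descFactorial j := by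
  rw [kappa, if_pos h, div_eq_iff (by positivity), ← Nat.cast_mul, mul_comm,
    Nat.factorial_mul_descFactorial h]

lemma add_le_exp_div_mul {d y s : ℝ} (hd : 0 < d) (hdy : d ≤ y) (hs : 0 ≤ s) :
    y + s ≤ exp (s / d) * y := by
  have hy : 0 < y := hd.trans_le hdy
  calc y + s = (s / y + 1) * y := by rw [add_mul, div_mul_cancel₀ _ hy.ne', one_mul, add_comm]
    _ ≤ exp (s / y) * y := by gcongr; exact add_one_le_exp _
    _ ≤ exp (s / d) * y := by gcongr

lemma descFactorial_le_exp_mul_descFactorial {j m n : ℕ} (hjm : j ≤ m) (hmn : m ≤ n) :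
    (n.descFactorial j : ℝ) ≤ exp (j * ((n - m) / (m - j + 1))) * m.descFactorial j := by
  have hcast {r : ℕ} (hr : j ≤ r) {i : ℕ} (hi : i ∈ range j) : ((r - i : ℕ) : ℝ) = r - i := by
    have : i ≤ r := by simp only [mem_range] at hi; omega
    push_cast [this]; ring
  have hj : (j : ℝ) ≤ m := by exact_mod_cast hjm
  have hnm : (m : ℝ) ≤ n := by exact_mod_cast hmn
  rw [Nat.descFactorial_eq_prod_range, Nat.descFactorial_eq_prod_range, Nat.cast_prod,
    Nat.cast_prod, prod_congr rfl fun i hi ↦ hcast (hjm.trans hmn) hi,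
    prod_congr rfl fun i hi ↦ hcast hjm hi, exp_nat_mul]
  calc ∏ i ∈ range j, ((n : ℝ) - i)
      ≤ ∏ i ∈ range j, exp ((n - m) / (m - j + 1)) * (m - i) := by
        refine prod_le_prod (fun i hi ↦ ?_) fun i hi ↦ ?_ <;>
          have hij : (i : ℝ) + 1 ≤ j := by exact_mod_cast mem_range.mp hi
        · linarith
        · calc (n : ℝ) - i = (m - i) + (n - m) := by ring
            _ ≤ _ := add_le_exp_div_mul (by linarith) (by linarith) (by linarith)
    _ = _ := by rw [prod_mul_distrib, prod_const, card_range]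

section FloorFraction

variable {n j : ℕ}

lemma le_mul_div_succ (h : j < n) : j ≤ n * j / (j + 1) :=
  (Nat.le_div_iff_mul_le j.succ_pos).mpr (by nlinarith)

lemma mul_div_succ_le : n * j / (j + 1) ≤ n :=
  Nat.div_le_of_le_mul (by nlinarith)

lemma mul_sub_mul_div_succ_le (hj : 1 ≤ j) (h2j : 2 * j ≤ n) :
    (j : ℝ) * (n - (n * j / (j + 1) : ℕ)) ≤ 5 * ((n * j / (j + 1) : ℕ) - j + 1) := by
  set m := n * j / (j + 1)
  have hlow : ((j : ℝ) + 1) * m ≤ n * j := by exact_mod_cast Nat.mul_div_le (n * j) (j + 1)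
  have hupp : (n : ℝ) * j + 1 ≤ ((j : ℝ) + 1) * (m + 1) := by
    exact_mod_cast Nat.lt_mul_div_succ (n * j) j.succ_pos
  have hj' : (1 : ℝ) ≤ j := by exact_mod_cast hj
  have h2j' : 2 * (j : ℝ) ≤ n := by exact_mod_cast h2j
  refine le_of_mul_le_mul_right ?_ (by positivity : (0 : ℝ) < j + 1)
  calc (j : ℝ) * (n - m) * (j + 1) = j * ((j + 1) * (n - m)) := by ring
    _ ≤ j * (n + j) := by gcongr; linarith
    _ ≤ 5 * (n * j - j ^ 2 - j + 1) := by nlinarith [sq_nonneg (4 * (j : ℝ) - 5)]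
    _ ≤ 5 * (m - j + 1) * (j + 1) := by linarith

end FloorFraction

theorem kappa_ratio_bounded :
    ∃ C : ℝ, ∀ n j : ℕ, 1 ≤ n → 1 ≤ j → 2 * j ≤ n →
      kappa j n / kappa j (n * j / (j + 1)) ≤ C := by
  refine ⟨exp 5, fun n j _ hj h2j ↦ ?_⟩
  set m := n * j / (j + 1)
  have hjm : j ≤ m := le_mul_div_succ (by omega)
  have hmn : m ≤ n := mul_div_succ_le
  have hpos : (0 : ℝ) < m.descFactorial j := by exact_mod_cast Nat.descFactorial_pos.mpr hjm
  have hexp : (j : ℝ) * ((n - m) / (m - j + 1)) ≤ 5 := by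
    have : (0 : ℝ) < m - j + 1 := by
      have : (j : ℝ) ≤ m := by exact_mod_cast hjm
      linarith
    rw [← mul_div_assoc, div_le_iff₀ this]
    exact mul_sub_mul_div_succ_le hj h2j
  rw [kappa_eq_descFactorial (hjm.trans hmn), kappa_eq_descFactorial hjm, div_le_iff₀ hpos]
  calc (n.descFactorial j : ℝ)
      ≤ exp (j * ((n - m) / (m - j + 1))) * m.descFactorial j :=
        descFactorial_le_exp_mul_descFactorial hjm hmn
    _ ≤ exp 5 * m.descFactorial j := by gcongr
end

section
/- For all integers n ≥ 1 and 1 ≤ j ≤ n, one has ∑_{r=j}^{n} (r!/(r−j)!)^2 ≤ (n/j) · (n!/(n−j)!)^2. -/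
/-!
Writing `r! / (r - j)! = r.descFactorial j =: d r`, multiply through by `j` and induct on `n`.
Since `(n + 1 - j) * d (n + 1) = (n + 1) * d n` and `d` is monotone,
`n * d n ^ 2 ≤ (n + 1 - j) * d (n + 1) ^ 2`, which is exactly what is needed to absorb the new
term `j * d (n + 1) ^ 2` when passing from `n` to `n + 1`.
-/

open Finset

namespace Nat

theorem mul_sq_descFactorial_le_succ (n j : ℕ) :
    n * n.descFactorial j ^ 2 ≤ (n + 1 - j) * (n + 1).descFactorial j ^ 2 :=
  calc n * n.descFactorial j ^ 2
      ≤ (n + 1) * n.descFactorial j * (n + 1).descFactorial j := by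
        rw [sq, ← mul_assoc]
        gcongr <;> omega
    _ = (n + 1 - j) * (n + 1).descFactorial j ^ 2 := by
        rw [← succ_descFactorial]; ring

theorem mul_sum_range_sq_descFactorial_le (n j : ℕ) :
    j * ∑ r ∈ range (n + 1), r.descFactorial j ^ 2 ≤ n * n.descFactorial j ^ 2 := by
  induction n with
  | zero => cases j <;> simp
  | succ n ih =>
    rw [sum_range_succ, mul_add]
    rcases le_or_gt j (n + 1) with hjn | hjn
    · calc j * ∑ r ∈ range (n + 1), r.descFactorial j ^ 2 + j * (n + 1).descFactorial j ^ 2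
          ≤ (n + 1 - j) * (n + 1).descFactorial j ^ 2 + j * (n + 1).descFactorial j ^ 2 :=
            Nat.add_le_add_right (ih.trans (mul_sq_descFactorial_le_succ n j)) _
        _ = (n + 1) * (n + 1).descFactorial j ^ 2 := by
            rw [← add_mul, Nat.sub_add_cancel hjn]
    · simpa [descFactorial_eq_zero_iff_lt.mpr hjn,
        descFactorial_eq_zero_iff_lt.mpr (lt_of_succ_lt hjn)] using ih

theorem cast_factorial_div_factorial_sub {K : Type*} [Field K] [CharZero K] {n k : ℕ}
    (h : k ≤ n) : (n ! : K) / (n - k)! = n.descFactorial k := by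
  rw [div_eq_iff (mod_cast factorial_ne_zero _), ← factorial_mul_descFactorial h]
  push_cast
  ring

end Nat

theorem sum_sq_descFactorial_le (n j : ℕ) (hj : 1 ≤ j) (hjn : j ≤ n) :
    ∑ r ∈ Finset.Icc j n, ((r.factorial : ℝ) / ((r - j).factorial : ℝ)) ^ 2 ≤
      ((n : ℝ) / (j : ℝ)) * ((n.factorial : ℝ) / ((n - j).factorial : ℝ)) ^ 2 := by
  have hj₀ : (0 : ℝ) < j := by exact_mod_cast hj
  have hsum : ∑ r ∈ Icc j n, ((r.factorial : ℝ) / ((r - j).factorial : ℝ)) ^ 2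
      = ∑ r ∈ range (n + 1), ((r.descFactorial j : ℕ) : ℝ) ^ 2 :=
    calc _ = ∑ r ∈ Icc j n, ((r.descFactorial j : ℕ) : ℝ) ^ 2 :=
          sum_congr rfl fun r hr => by
            rw [Nat.cast_factorial_div_factorial_sub (mem_Icc.mp hr).1]
      _ = _ := by
          refine sum_subset (fun r hr => by simp only [mem_Icc, mem_range] at hr ⊢; omega)
            fun r hr hr' => ?_
          simp only [mem_range, mem_Icc] at hr hr'
          simp [Nat.descFactorial_eq_zero_iff_lt.mpr (by omega : r < j)]
  rw [hsum, Nat.cast_factorial_div_factorial_sub hjn, div_mul_eq_mul_div, le_div_iff₀ hj₀,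
    mul_comm]
  exact_mod_cast Nat.mul_sum_range_sq_descFactorial_le n j
end

section
/- Let (α_k)_{k≥0} be real numbers in (−1,1), and define polynomials Φ_n, Φ_n^* by Φ_0 = Φ_0^* = 1, Φ_{n+1}(z) = zΦ_n(z) − α_n Φ_n^*(z), Φ_{n+1}^*(z) = −α_n z Φ_n(z) + Φ_n^*(z). For integers n ≥ 0 and 0 ≤ j ≤ n+1, the pair of j-th derivatives (Φ_{n+1}^{(j)}(1), (Φ_{n+1}^*)^{(j)}(1))ᵀ equals j! times the sum over all multi-indices γ = (γ_0, …, γ_n) ∈ {0,1}^{n+1} with γ_0 + ⋯ + γ_n = j of the matrix product Π_{γ_n}(α_n) ⋯ Π_{γ_0}(α_0) applied to the vector (1,1)ᵀ, where Π_0(α) = [[1,−α],[−α,1]] and Π_1(α) = [[1,0],[−α,0]]. -/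
/-!
Writing `z = 1 + w`, the transfer matrix `[[z, -α], [-α z, 1]]` equals `Π_0(α) + w Π_1(α)`.
Expanding the ordered product of these binomials, the coefficient of `w ^ j` in
`(Φ_{n+1}, Φ_{n+1}^*)(1 + w)` is the sum over `γ ∈ {0,1}^{n+1}` with `|γ| = j` of
`Π_{γ_n}(α_n) ⋯ Π_{γ_0}(α_0) (1, 1)ᵀ`, and the `j`-th derivative at `1` is `j!` times
this Taylor coefficient.
-/

/-- `Π_0(α) = [[1,−α],[−α,1]]` and `Π_1(α) = [[1,0],[−α,0]]`. -/
def PiMat (g : Fin 2) (a : ℝ) : Matrix (Fin 2) (Fin 2) ℝ :=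
  if g = 0 then !![1, -a; -a, 1] else !![1, 0; -a, 0]

open Polynomial Finset Nat Matrix

theorem List.prod_map_reverse_finRange_succ {M : Type*} [Monoid M] (m : ℕ)
    (f : Fin (m + 1) → M) :
    ((List.finRange (m + 1)).reverse.map f).prod =
      f (Fin.last m) * ((List.finRange m).reverse.map (fun i => f i.castSucc)).prod := by
  simp [List.finRange_succ_last, List.map_reverse, Function.comp_def]

theorem Polynomial.iterate_derivative_eval_eq_factorial_mul_taylor_coeff {R : Type*}
    [CommSemiring R] (p : R[X]) (r : R) (j : ℕ) :
    (derivative^[j] p).eval r = j ! * (taylor r p).coeff j := by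
  rw [taylor_coeff, ← factorial_smul_hasseDeriv, LinearMap.smul_apply, eval_smul, nsmul_eq_mul]

section MultiindexProdSum

variable {R : Type*} [Semiring R] (A : Fin 2 → ℕ → R)

/-- The coefficient of `w ^ j` in `(A 0 (m-1) + w A 1 (m-1)) ⋯ (A 0 0 + w A 1 0)`. -/
def multiindexProdSum (m j : ℕ) : R :=
  ∑ γ ∈ univ.filter (fun γ : Fin m → Fin 2 => ∑ i, (γ i : ℕ) = j),
    ((List.finRange m).reverse.map (fun i => A (γ i) i)).prod

theorem multiindexProdSum_zero (j : ℕ) :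
    multiindexProdSum A 0 j = if j = 0 then 1 else 0 := by
  by_cases hj : j = 0 <;> simp [multiindexProdSum, hj, eq_comm]

theorem multiindexProdSum_succ (m j : ℕ) :
    multiindexProdSum A (m + 1) j =
      A 0 m * multiindexProdSum A m j +
        ∑ γ ∈ univ.filter (fun γ : Fin m → Fin 2 => ∑ i, (γ i : ℕ) + 1 = j),
          A 1 m * ((List.finRange m).reverse.map (fun i => A (γ i) i)).prod := by
  simp only [multiindexProdSum, mul_sum, sum_filter]
  rw [← (Fin.snocEquiv fun _ => Fin 2).sum_comp, Fintype.sum_prod_type, Fin.sum_univ_two]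
  simp only [List.prod_map_reverse_finRange_succ]
  simp [Fin.sum_univ_castSucc, Fin.snocEquiv]

theorem multiindexProdSum_succ_zero (m : ℕ) :
    multiindexProdSum A (m + 1) 0 = A 0 m * multiindexProdSum A m 0 := by
  simp [multiindexProdSum_succ]

theorem multiindexProdSum_succ_succ (m j : ℕ) :
    multiindexProdSum A (m + 1) (j + 1) =
      A 0 m * multiindexProdSum A m (j + 1) + A 1 m * multiindexProdSum A m j := by
  rw [multiindexProdSum_succ]
  congr 1
  simp [multiindexProdSum, mul_sum]

end MultiindexProdSum

theorem taylor_one_transfer_coeff (a : ℝ) (p q : ℝ[X]) (j : ℕ) :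
    ![(taylor 1 (X * p - C a * q)).coeff j, (taylor 1 (-C a * X * p + q)).coeff j] =
      PiMat 0 a *ᵥ ![(taylor 1 p).coeff j, (taylor 1 q).coeff j] +
        PiMat 1 a *ᵥ ![(X * taylor 1 p).coeff j, (X * taylor 1 q).coeff j] := by
  ext i
  fin_cases i <;> simp [taylor_mul, mul_assoc, PiMat, add_mul] <;> ring

theorem taylor_one_coeff_eq_multiindexProdSum_mulVec (α : ℕ → ℝ) (Φ Φs : ℕ → ℝ[X])
    (h0 : Φ 0 = 1) (h0s : Φs 0 = 1)
    (hrec : ∀ n, Φ (n + 1) = X * Φ n - C (α n) * Φs n)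
    (hrecs : ∀ n, Φs (n + 1) = -C (α n) * X * Φ n + Φs n) (m j : ℕ) :
    ![(taylor 1 (Φ m)).coeff j, (taylor 1 (Φs m)).coeff j] =
      multiindexProdSum (fun g k => PiMat g (α k)) m j *ᵥ ![1, 1] := by
  induction m generalizing j with
  | zero =>
    rw [h0, h0s, multiindexProdSum_zero]
    split_ifs with hj <;> simp [hj, coeff_one]
  | succ m ih =>
    rw [hrec, hrecs, taylor_one_transfer_coeff]
    cases j with
    | zero =>
      rw [coeff_X_mul_zero, coeff_X_mul_zero, ih, multiindexProdSum_succ_zero, ← mulVec_mulVec]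
      simp
    | succ j =>
      rw [coeff_X_mul, coeff_X_mul, ih, ih, multiindexProdSum_succ_succ, add_mulVec,
        mulVec_mulVec, mulVec_mulVec]

theorem derivatives_via_multiindex_sum_general (α : ℕ → ℝ)
    (Φ Φs : ℕ → Polynomial ℝ)
    (h0 : Φ 0 = 1) (h0s : Φs 0 = 1)
    (hrec : ∀ n, Φ (n + 1) = Polynomial.X * Φ n - Polynomial.C (α n) * Φs n)
    (hrecs : ∀ n, Φs (n + 1) = -(Polynomial.C (α n)) * Polynomial.X * Φ n + Φs n) :
    ∀ n j : ℕ, j ≤ n + 1 →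
      (![(Polynomial.derivative^[j] (Φ (n + 1))).eval 1,
          (Polynomial.derivative^[j] (Φs (n + 1))).eval 1] : Fin 2 → ℝ) =
        (j.factorial : ℝ) •
          ∑ γ ∈ Finset.univ.filter
              (fun γ : Fin (n + 1) → Fin 2 => ∑ i, (γ i : ℕ) = j),
            (((List.finRange (n + 1)).reverse.map
                (fun i => PiMat (γ i) (α i))).prod).mulVec ![1, 1] := by
  intro n j _
  simp only [iterate_derivative_eval_eq_factorial_mul_taylor_coeff]
  rw [← sum_mulVec]
  change _ = _ • multiindexProdSum (fun g k => PiMat g (α k)) (n + 1) j *ᵥ _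
  rw [← taylor_one_coeff_eq_multiindexProdSum_mulVec α Φ Φs h0 h0s hrec hrecs]
  simp

theorem derivatives_via_multiindex_sum (α : ℕ → ℝ) (hα : ∀ k, |α k| < 1)
    (Φ Φs : ℕ → Polynomial ℝ)
    (h0 : Φ 0 = 1) (h0s : Φs 0 = 1)
    (hrec : ∀ n, Φ (n + 1) = Polynomial.X * Φ n - Polynomial.C (α n) * Φs n)
    (hrecs : ∀ n, Φs (n + 1) = -(Polynomial.C (α n)) * Polynomial.X * Φ n + Φs n) :
    ∀ n j : ℕ, j ≤ n + 1 →
      (![(Polynomial.derivative^[j] (Φ (n + 1))).eval 1,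
          (Polynomial.derivative^[j] (Φs (n + 1))).eval 1] : Fin 2 → ℝ) =
        (j.factorial : ℝ) •
          ∑ γ ∈ Finset.univ.filter
              (fun γ : Fin (n + 1) → Fin 2 => ∑ i, (γ i : ℕ) = j),
            (((List.finRange (n + 1)).reverse.map
                (fun i => PiMat (γ i) (α i))).prod).mulVec ![1, 1] :=
  derivatives_via_multiindex_sum_general α Φ Φs h0 h0s hrec hrecs
end

section
/- With the setup of the previous lemma and h(r) = ∏_{k=0}^{r-1} (1−α_k)/(1+α_k) (and h(0)=1), for all integers n ≥ 0 and 1 ≤ j ≤ n+1 one has Φ_{n+1}^{(j)}(1) = (j!/2^j) · ∏_{t=0}^{n} (1−α_t) · ∑_{t_1=0}^{n} ∑_{t_2=0}^{t_1−1} ⋯ ∑_{t_j=0}^{t_{j-1}−1} ∏_{s=1}^{j} (1 + h(t_s)/h(t_{s-1})), where t_0 = n+1 and each inner sum over t_s ranges over 0 ≤ t_s < t_{s-1} (being 0 if empty). -/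
/-!
Substitute `z = 1 + 2w`: the `j`-th coefficient of `Φ_n(1 + 2w)` is `2^j Φ_n^{(j)}(1) / j!`.
Multiplying by `1 + 2w` shifts coefficients with weight `2`, so the Szegő recursion becomes a
first-order recursion in `n` for the coefficient pairs of `Φ_n(1 + 2w)` and `Φ*_n(1 + 2w)`.
Because `h(n+1)/h(n) = (1 - α_n)/(1 + α_n)`, the iterated sum `F j n` together with the
companion sum `∑_{t<n} (1 - h t / h n) F j t` satisfies the same recursion once multiplied by
`∏_{t<n} (1 - α_t)`, and both sides agree at `n = 0`.
-/
open Polynomial Finset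
open scoped Nat

namespace Polynomial
variable {R : Type*} [CommSemiring R]

theorem factorial_mul_coeff_comp_C_mul_X_add_C (p : R[X]) (a r : R) (k : ℕ) :
    k ! * (p.comp (C a * X + C r)).coeff k = a ^ k * (derivative^[k] p).eval r := by
  have hcomp : p.comp (C a * X + C r) = (taylor r p).comp (C a * X) := by
    rw [taylor_apply, comp_assoc, add_comp, X_comp, C_comp]
  rw [hcomp, comp_C_mul_X_coeff, taylor_coeff, ← factorial_smul_hasseDeriv,
    LinearMap.smul_apply, eval_smul, nsmul_eq_mul]
  ring

theorem coeff_C_mul_X_add_C_mul_succ (p : R[X]) (a r : R) (k : ℕ) :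
    ((C a * X + C r) * p).coeff (k + 1) = a * p.coeff k + r * p.coeff (k + 1) := by
  rw [add_mul, coeff_add, mul_assoc, coeff_C_mul, coeff_X_mul, coeff_C_mul]

theorem coeff_C_mul_X_add_C_mul_zero (p : R[X]) (a r : R) :
    ((C a * X + C r) * p).coeff 0 = r * p.coeff 0 := by
  simp [mul_coeff_zero]

end Polynomial

noncomputable def companionSum (h : ℕ → ℝ) (F : ℕ → ℕ → ℝ) (j n : ℕ) : ℝ :=
  ∑ t ∈ range n, (1 - h t / h n) * F j t

section IteratedSum

variable {h : ℕ → ℝ} {F : ℕ → ℕ → ℝ} {a : ℝ} {n : ℕ}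

theorem one_sub_mul_div_succ (hn : h n ≠ 0) (ha : 1 - a ≠ 0)
    (hstep : h (n + 1) * (1 + a) = h n * (1 - a)) (x : ℝ) :
    (1 - a) * (x / h (n + 1)) = (1 + a) * (x / h n) := by
  have hn' : h (n + 1) ≠ 0 := by
    rintro h0
    simp only [h0, zero_mul] at hstep
    exact mul_ne_zero hn ha hstep.symm
  field_simp
  linear_combination -x * hstep

theorem one_sub_mul_iteratedSum_succ
    (hFs : ∀ j t₀, F (j + 1) t₀ = ∑ t ∈ range t₀, (1 + h t / h t₀) * F j t)
    (hn : h n ≠ 0) (ha : 1 - a ≠ 0) (hstep : h (n + 1) * (1 + a) = h n * (1 - a)) (j : ℕ) :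
    (1 - a) * F (j + 1) (n + 1) = F (j + 1) n + 2 * F j n - a * companionSum h F j n := by
  have hterm (t : ℕ) : (1 - a) * ((1 + h t / h (n + 1)) * F j t)
      = (1 + h t / h n) * F j t - a * ((1 - h t / h n) * F j t) := by
    linear_combination F j t * one_sub_mul_div_succ hn ha hstep (h t)
  rw [hFs, mul_sum, sum_congr rfl fun t _ => hterm t, sum_range_succ, sum_sub_distrib,
    ← hFs, ← mul_sum, companionSum, div_self hn]
  ring

theorem one_sub_mul_companionSum_succ
    (hFs : ∀ j t₀, F (j + 1) t₀ = ∑ t ∈ range t₀, (1 + h t / h t₀) * F j t)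
    (hn : h n ≠ 0) (ha : 1 - a ≠ 0) (hstep : h (n + 1) * (1 + a) = h n * (1 - a)) (j : ℕ) :
    (1 - a) * companionSum h F j (n + 1)
      = -a * F (j + 1) n - 2 * a * F j n + companionSum h F j n := by
  have hterm (t : ℕ) : (1 - a) * ((1 - h t / h (n + 1)) * F j t)
      = -a * ((1 + h t / h n) * F j t) + (1 - h t / h n) * F j t := by
    linear_combination -F j t * one_sub_mul_div_succ hn ha hstep (h t)
  rw [companionSum, mul_sum, sum_congr rfl fun t _ => hterm t, sum_range_succ, sum_add_distrib,
    ← mul_sum, ← hFs, companionSum, div_self hn]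
  ring

end IteratedSum

section SzegoRecursion

variable {α h : ℕ → ℝ} {F : ℕ → ℕ → ℝ} {Φ Φs : ℕ → ℝ[X]}

theorem szego_coeff_comp_two_mul_X_add_one (h0 : Φ 0 = 1) (h0s : Φs 0 = 1)
    (hrec : ∀ n, Φ (n + 1) = X * Φ n - C (α n) * Φs n)
    (hrecs : ∀ n, Φs (n + 1) = -C (α n) * X * Φ n + Φs n)
    (hF0 : ∀ t, F 0 t = 1)
    (hFs : ∀ j t₀, F (j + 1) t₀ = ∑ t ∈ range t₀, (1 + h t / h t₀) * F j t)
    (hne : ∀ n, h n ≠ 0) (hsub : ∀ n, 1 - α n ≠ 0)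
    (hstep : ∀ n, h (n + 1) * (1 + α n) = h n * (1 - α n)) (n : ℕ) :
    (∀ j, ((Φ n).comp (C 2 * X + C 1)).coeff j = (∏ t ∈ range n, (1 - α t)) * F j n) ∧
      ((Φs n).comp (C 2 * X + C 1)).coeff 0 = ∏ t ∈ range n, (1 - α t) ∧
      ∀ j, ((Φs n).comp (C 2 * X + C 1)).coeff (j + 1) =
        (∏ t ∈ range n, (1 - α t)) * companionSum h F j n := by
  induction n with
  | zero =>
    refine ⟨fun j => ?_, by simp [h0s], fun j => by simp [h0s, coeff_one, companionSum]⟩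
    rcases j with _ | j <;> simp [h0, coeff_one, hF0, hFs]
  | succ n ih =>
    obtain ⟨ihΦ, ihΦs_zero, ihΦs⟩ := ih
    set q : ℝ[X] := C 2 * X + C 1
    have hΦ : (Φ (n + 1)).comp q = q * (Φ n).comp q - C (α n) * (Φs n).comp q := by
      rw [hrec, sub_comp, mul_comp, mul_comp, X_comp, C_comp]
    have hΦs : (Φs (n + 1)).comp q = C (-α n) * (q * (Φ n).comp q) + (Φs n).comp q := by
      rw [hrecs, add_comp, mul_comp, mul_comp, X_comp, neg_comp, C_comp, C_neg]
      ring
    simp only [prod_range_succ]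
    refine ⟨fun j => ?_, ?_, fun j => ?_⟩
    · rcases j with _ | j
      · rw [hΦ, coeff_sub, coeff_C_mul_X_add_C_mul_zero, coeff_C_mul, ihΦ, ihΦs_zero, hF0, hF0]
        ring
      · rw [hΦ, coeff_sub, coeff_C_mul_X_add_C_mul_succ, coeff_C_mul, ihΦ, ihΦ, ihΦs]
        linear_combination -(∏ t ∈ range n, (1 - α t)) *
          one_sub_mul_iteratedSum_succ hFs (hne n) (hsub n) (hstep n) j
    · rw [hΦs, coeff_add, coeff_C_mul, coeff_C_mul_X_add_C_mul_zero, ihΦ, ihΦs_zero, hF0]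
      ring
    · rw [hΦs, coeff_add, coeff_C_mul, coeff_C_mul_X_add_C_mul_succ, ihΦ, ihΦ, ihΦs]
      linear_combination -(∏ t ∈ range n, (1 - α t)) *
        one_sub_mul_companionSum_succ hFs (hne n) (hsub n) (hstep n) j

end SzegoRecursion

theorem derivative_formula_at_one (α : ℕ → ℝ) (hα : ∀ k, |α k| < 1)
    (Φ Φs : ℕ → Polynomial ℝ)
    (h0 : Φ 0 = 1) (h0s : Φs 0 = 1)
    (hrec : ∀ n, Φ (n + 1) = Polynomial.X * Φ n - Polynomial.C (α n) * Φs n)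
    (hrecs : ∀ n, Φs (n + 1) = -(Polynomial.C (α n)) * Polynomial.X * Φ n + Φs n)
    (h : ℕ → ℝ) (hh : ∀ r, h r = ∏ k ∈ Finset.range r, (1 - α k) / (1 + α k))
    -- `F j t₀` is the iterated sum `∑_{t_1 < t₀} ∑_{t_2 < t_1} ⋯ ∑_{t_j < t_{j-1}}
    -- ∏_{s=1}^{j} (1 + h(t_s)/h(t_{s-1}))`.
    (F : ℕ → ℕ → ℝ) (hF0 : ∀ t, F 0 t = 1)
    (hFs : ∀ j t₀, F (j + 1) t₀ = ∑ t ∈ Finset.range t₀, (1 + h t / h t₀) * F j t) :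
    ∀ n j : ℕ, 1 ≤ j → j ≤ n + 1 →
      (Polynomial.derivative^[j] (Φ (n + 1))).eval 1 =
        ((j.factorial : ℝ) / 2 ^ j) * (∏ t ∈ Finset.range (n + 1), (1 - α t)) *
          F j (n + 1) := by
  have hsub (k : ℕ) : 1 - α k ≠ 0 := by linarith [(abs_lt.mp (hα k)).2]
  have hadd (k : ℕ) : 1 + α k ≠ 0 := by linarith [(abs_lt.mp (hα k)).1]
  have hne (r : ℕ) : h r ≠ 0 := by
    rw [hh]
    exact prod_ne_zero_iff.mpr fun k _ => div_ne_zero (hsub k) (hadd k)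
  have hstep (r : ℕ) : h (r + 1) * (1 + α r) = h r * (1 - α r) := by
    rw [hh, hh, prod_range_succ, mul_assoc, div_mul_cancel₀ _ (hadd r)]
  intro n j _ _
  have hcoeff := (szego_coeff_comp_two_mul_X_add_one h0 h0s hrec hrecs hF0 hFs hne hsub hstep
    (n + 1)).1 j
  have htaylor := factorial_mul_coeff_comp_C_mul_X_add_C (Φ (n + 1)) 2 1 j
  rw [hcoeff] at htaylor
  field_simp
  linear_combination -htaylor
end

section
/- Let μ = w·dm + μ_s be a measure on the unit circle in the Steklov class (inf_T w > 0), and for n ≥ 0 let H²(μ,n) be the space of analytic polynomials of degree at most n with the L²(μ) inner product, with reproducing kernel k_{ζ,μ,n}. Then there exists a constant c (depending only on μ) such that ‖∂̄^j k_{1,μ,n}‖²_{L²(μ)} ≤ c · ‖∂̄^j k_{1,m,n}‖²_{L²(m)} for all n ≥ 0 and 0 ≤ j ≤ n, where ∂̄^j denotes the j-th derivative of the anti-analytic map ζ ↦ k_{ζ,·,n} evaluated at ζ = 1, and m is normalized Lebesgue measure on the circle. -/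
open MeasureTheory

/-- Parametrization of the unit circle: `θ ↦ e^{iθ}`. -/
noncomputable def circlePt (θ : ℝ) : ℂ := Complex.exp (θ * Complex.I)

/-- The kernel `K(ζ,z) = ∑_{p,q ≤ n} c p q · z^p · (conj ζ)^q`, a polynomial of degree
at most `n` in `z` and anti-analytic polynomial of degree at most `n` in `ζ`. -/
noncomputable def kernelFun (n : ℕ) (c : ℕ → ℕ → ℂ) (ζ z : ℂ) : ℂ :=
  ∑ p ∈ Finset.range (n + 1), ∑ q ∈ Finset.range (n + 1),
    c p q * z ^ p * (starRingEnd ℂ ζ) ^ q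

/-- `c` encodes the reproducing kernel of the space of analytic polynomials of degree
at most `n` in `L²(ν)` (circle parametrized by `θ ∈ (0, 2π]`). -/
def IsRepKernel (ν : Measure ℝ) (n : ℕ) (c : ℕ → ℕ → ℂ) : Prop :=
  ∀ f : Polynomial ℂ, f.natDegree ≤ n → ∀ ζ : ℂ,
    ∫ θ, f.eval (circlePt θ) * (starRingEnd ℂ) (kernelFun n c ζ (circlePt θ)) ∂ν = f.eval ζ

/-- The `j`-th derivative in `conj ζ` of `ζ ↦ K(ζ, z)` evaluated at `ζ = 1`:
`∂̄^j k_{1,ν,n}(z) = ∑_{p,q} c p q · q!/(q−j)! · z^p`. -/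
noncomputable def dbarKernel (n j : ℕ) (c : ℕ → ℕ → ℂ) (z : ℂ) : ℂ :=
  ∑ p ∈ Finset.range (n + 1), ∑ q ∈ Finset.range (n + 1),
    c p q * (q.descFactorial j : ℂ) * z ^ p

/-!
Write `u = ∂̄^j k_{1,μ,n}` and `v = ∂̄^j k_{1,m,n}`. Both reproduce the same functional
`f ↦ f⁽ʲ⁾(1)` on polynomials of degree `≤ n`, in `L²(μ)` and `L²(m)` respectively, so
`‖u‖²_μ = u⁽ʲ⁾(1) = ⟨u, v⟩_m`. Expanding `0 ≤ ‖ε u - v‖²_m` and using the Steklov bound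
`ε ‖u‖²_m ≤ ‖u‖²_μ` gives `ε ‖u‖²_μ ≤ ‖v‖²_m`, so `c = ε⁻¹` works.
-/

open MeasureTheory Finset Polynomial

lemma continuous_circlePt : Continuous circlePt := by
  unfold circlePt; fun_prop

lemma circlePt_mem_sphere (θ : ℝ) : circlePt θ ∈ Metric.sphere (0 : ℂ) 1 := by
  simp [circlePt, Complex.norm_exp]

lemma Continuous.integrable_comp_circlePt {E : Type*} [NormedAddCommGroup E]
    {h : ℂ → E} (hh : Continuous h) (ν : Measure ℝ) [IsFiniteMeasure ν] :
    Integrable (fun θ => h (circlePt θ)) ν := by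
  obtain ⟨C, hC⟩ := (isCompact_sphere (0 : ℂ) 1).exists_bound_of_continuousOn hh.continuousOn
  exact (integrable_const C).mono' (hh.comp continuous_circlePt).aestronglyMeasurable
    (.of_forall fun θ => hC _ (circlePt_mem_sphere θ))

lemma integrable_eval_mul_conj_comp_circlePt (ν : Measure ℝ) [IsFiniteMeasure ν] (f : ℂ[X])
    {g : ℂ → ℂ} (hg : Continuous g) :
    Integrable (fun θ => f.eval (circlePt θ) * starRingEnd ℂ (g (circlePt θ))) ν :=
  (f.continuous.mul (continuous_star.comp hg)).integrable_comp_circlePt ν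

lemma isFiniteMeasure_normalizedArcLength :
    IsFiniteMeasure ((ENNReal.ofReal (2 * Real.pi))⁻¹ •
      volume.restrict (Set.Ioc 0 (2 * Real.pi))) := by
  constructor
  rw [Measure.smul_apply, Measure.restrict_apply_univ, Real.volume_Ioc, smul_eq_mul]
  exact ENNReal.mul_lt_top (ENNReal.inv_lt_top.mpr (by positivity)) ENNReal.ofReal_lt_top

lemma mul_integral_le_of_smul_le {α : Type*} [MeasurableSpace α] {m μ : Measure α}
    {ε : ℝ} (hε : 0 ≤ ε) (hle : ENNReal.ofReal ε • m ≤ μ) {g : α → ℝ} (hg : 0 ≤ g)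
    (hgμ : Integrable g μ) :
    ε * ∫ x, g x ∂m ≤ ∫ x, g x ∂μ := by
  have h := integral_mono_measure hle (.of_forall hg) hgμ
  rwa [integral_smul_measure, ENNReal.toReal_ofReal hε, smul_eq_mul] at h

lemma two_mul_re_mul_conj_le (ε : ℝ) (a b : ℂ) :
    2 * ε * (a * starRingEnd ℂ b).re ≤ ε ^ 2 * ‖a‖ ^ 2 + ‖b‖ ^ 2 := by
  have h := sq_nonneg ‖(ε : ℂ) * a - b‖
  simp only [Complex.sq_norm, Complex.normSq_apply, Complex.sub_re, Complex.sub_im,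
    Complex.mul_re, Complex.mul_im, Complex.conj_re, Complex.conj_im, Complex.ofReal_re,
    Complex.ofReal_im] at h ⊢
  nlinarith

lemma two_mul_re_integral_mul_conj_le {α : Type*} [MeasurableSpace α] {m : Measure α}
    {u v : α → ℂ} (ε : ℝ) (hu : Integrable (fun x => ‖u x‖ ^ 2) m)
    (hv : Integrable (fun x => ‖v x‖ ^ 2) m)
    (huv : Integrable (fun x => u x * starRingEnd ℂ (v x)) m) :
    2 * ε * (∫ x, u x * starRingEnd ℂ (v x) ∂m).re
      ≤ ε ^ 2 * ∫ x, ‖u x‖ ^ 2 ∂m + ∫ x, ‖v x‖ ^ 2 ∂m := by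
  rw [← RCLike.re_to_complex, ← integral_re huv, ← integral_const_mul, ← integral_const_mul,
    ← integral_add (hu.const_mul _) hv]
  exact integral_mono (huv.re.const_mul _) ((hu.const_mul _).add hv)
    fun x => two_mul_re_mul_conj_le ε (u x) (v x)

lemma continuous_dbarKernel (n j : ℕ) (c : ℕ → ℕ → ℂ) : Continuous (dbarKernel n j c) := by
  unfold dbarKernel; fun_prop

lemma Polynomial.coeff_eq_of_forall_eval_eq_sum {R : Type*} [CommRing R] [IsDomain R]
    [Infinite R] {f : R[X]} {n : ℕ} {a : ℕ → R}
    (h : ∀ ζ, f.eval ζ = ∑ q ∈ range (n + 1), a q * ζ ^ q) {q : ℕ} (hq : q ≤ n) :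
    f.coeff q = a q := by
  have hf : f = ∑ q ∈ range (n + 1), C (a q) * X ^ q :=
    Polynomial.funext fun ζ => by simp [h, eval_finsetSum]
  rw [hf, finsetSum_coeff]
  simp [Nat.lt_succ_iff.mpr hq]

section RepKernel

variable (n j : ℕ) (c : ℕ → ℕ → ℂ)

noncomputable def kernelCoeffFun (q : ℕ) (z : ℂ) : ℂ :=
  ∑ p ∈ range (n + 1), c p q * z ^ p

lemma continuous_kernelCoeffFun (q : ℕ) : Continuous (kernelCoeffFun n c q) := by
  unfold kernelCoeffFun; fun_prop

lemma kernelFun_eq_sum_kernelCoeffFun (ζ z : ℂ) :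
    kernelFun n c ζ z = ∑ q ∈ range (n + 1), kernelCoeffFun n c q z * starRingEnd ℂ ζ ^ q := by
  simp only [kernelFun, kernelCoeffFun, sum_mul]
  exact sum_comm

lemma dbarKernel_eq_sum_kernelCoeffFun (z : ℂ) :
    dbarKernel n j c z = ∑ q ∈ range (n + 1), (q.descFactorial j : ℂ) * kernelCoeffFun n c q z := by
  simp only [dbarKernel, kernelCoeffFun, mul_sum]
  rw [sum_comm]
  exact sum_congr rfl fun _ _ => sum_congr rfl fun _ _ => by ring

noncomputable def dbarKernelPoly : ℂ[X] :=
  ∑ p ∈ range (n + 1), C (∑ q ∈ range (n + 1), c p q * (q.descFactorial j : ℂ)) * X ^ p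

lemma eval_dbarKernelPoly (z : ℂ) : (dbarKernelPoly n j c).eval z = dbarKernel n j c z := by
  simp [dbarKernelPoly, dbarKernel, eval_finsetSum, sum_mul]

lemma natDegree_dbarKernelPoly_le : (dbarKernelPoly n j c).natDegree ≤ n :=
  natDegree_sum_le_of_forall_le _ _ fun _ hp =>
    (natDegree_C_mul_X_pow_le _ _).trans (Nat.lt_succ_iff.mp (mem_range.mp hp))

variable {n c} {ν : Measure ℝ} [IsFiniteMeasure ν]

lemma IsRepKernel.integral_mul_conj_kernelCoeffFun (hrep : IsRepKernel ν n c) {f : ℂ[X]}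
    (hf : f.natDegree ≤ n) {q : ℕ} (hq : q ≤ n) :
    ∫ θ, f.eval (circlePt θ) * starRingEnd ℂ (kernelCoeffFun n c q (circlePt θ)) ∂ν
      = f.coeff q := by
  let a q := ∫ θ, f.eval (circlePt θ) * starRingEnd ℂ (kernelCoeffFun n c q (circlePt θ)) ∂ν
  refine (coeff_eq_of_forall_eval_eq_sum (a := a) (fun ζ => ?_) hq).symm
  simp only [a, ← integral_mul_const]
  rw [← hrep f hf ζ, ← integral_finsetSum]
  · refine integral_congr_ae (.of_forall fun θ => ?_)
    simp only [kernelFun_eq_sum_kernelCoeffFun, map_sum, map_mul, map_pow, Complex.conj_conj,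
      mul_sum]
    exact sum_congr rfl fun _ _ => by ring
  · exact fun p _ => (integrable_eval_mul_conj_comp_circlePt ν f
      (continuous_kernelCoeffFun n c p)).mul_const _

lemma IsRepKernel.integral_mul_conj_dbarKernel (hrep : IsRepKernel ν n c) {f : ℂ[X]}
    (hf : f.natDegree ≤ n) :
    ∫ θ, f.eval (circlePt θ) * starRingEnd ℂ (dbarKernel n j c (circlePt θ)) ∂ν
      = ∑ q ∈ range (n + 1), (q.descFactorial j : ℂ) * f.coeff q := by
  have hsum : ∀ θ, f.eval (circlePt θ) * starRingEnd ℂ (dbarKernel n j c (circlePt θ))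
      = ∑ q ∈ range (n + 1), (q.descFactorial j : ℂ) *
          (f.eval (circlePt θ) * starRingEnd ℂ (kernelCoeffFun n c q (circlePt θ))) := by
    intro θ
    simp only [dbarKernel_eq_sum_kernelCoeffFun, map_sum, map_mul, map_natCast, mul_sum]
    exact sum_congr rfl fun _ _ => by ring
  simp_rw [hsum]
  rw [integral_finsetSum _ fun q _ => (integrable_eval_mul_conj_comp_circlePt ν f
    (continuous_kernelCoeffFun n c q)).const_mul _]
  refine sum_congr rfl fun q hq => ?_
  rw [integral_const_mul,
    hrep.integral_mul_conj_kernelCoeffFun hf (Nat.lt_succ_iff.mp (mem_range.mp hq))]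

end RepKernel

lemma IsRepKernel.integral_dbarKernel_mul_conj_eq {n j : ℕ} {cμ cm : ℕ → ℕ → ℂ}
    {μ m : Measure ℝ} [IsFiniteMeasure μ] [IsFiniteMeasure m]
    (hμ : IsRepKernel μ n cμ) (hm : IsRepKernel m n cm) :
    ∫ θ, dbarKernel n j cμ (circlePt θ) * starRingEnd ℂ (dbarKernel n j cm (circlePt θ)) ∂m
      = ((∫ θ, ‖dbarKernel n j cμ (circlePt θ)‖ ^ 2 ∂μ : ℝ) : ℂ) := by
  have hdeg := natDegree_dbarKernelPoly_le n j cμ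
  calc ∫ θ, dbarKernel n j cμ (circlePt θ) * starRingEnd ℂ (dbarKernel n j cm (circlePt θ)) ∂m
      = ∑ q ∈ range (n + 1), (q.descFactorial j : ℂ) * (dbarKernelPoly n j cμ).coeff q := by
        simp only [← hm.integral_mul_conj_dbarKernel j hdeg, eval_dbarKernelPoly]
    _ = ∫ θ, dbarKernel n j cμ (circlePt θ) * starRingEnd ℂ (dbarKernel n j cμ (circlePt θ)) ∂μ := by
        simp only [← hμ.integral_mul_conj_dbarKernel j hdeg, eval_dbarKernelPoly]
    _ = ((∫ θ, ‖dbarKernel n j cμ (circlePt θ)‖ ^ 2 ∂μ : ℝ) : ℂ) := by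
        simp_rw [Complex.mul_conj', ← Complex.ofReal_pow, integral_complex_ofReal]

theorem kernel_derivative_norm_comparison_general
    (μ : Measure ℝ) [IsFiniteMeasure μ]
    (ε : ℝ) (hε : 0 < ε)
    (hSteklov : ENNReal.ofReal ε •
        ((ENNReal.ofReal (2 * Real.pi))⁻¹ • volume.restrict (Set.Ioc 0 (2 * Real.pi))) ≤ μ) :
    ∃ c : ℝ, ∀ n j : ℕ, j ≤ n → ∀ cμ cm : ℕ → ℕ → ℂ,
      IsRepKernel μ n cμ →
      IsRepKernel ((ENNReal.ofReal (2 * Real.pi))⁻¹ • volume.restrict (Set.Ioc 0 (2 * Real.pi))) n cm →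
      ∫ θ, ‖dbarKernel n j cμ (circlePt θ)‖ ^ 2 ∂μ ≤
        c * ∫ θ, ‖dbarKernel n j cm (circlePt θ)‖ ^ 2
              ∂((ENNReal.ofReal (2 * Real.pi))⁻¹ • volume.restrict (Set.Ioc 0 (2 * Real.pi))) := by
  set m : Measure ℝ :=
    (ENNReal.ofReal (2 * Real.pi))⁻¹ • volume.restrict (Set.Ioc 0 (2 * Real.pi))
  have : IsFiniteMeasure m := isFiniteMeasure_normalizedArcLength
  refine ⟨ε⁻¹, fun n j _ cμ cm hμ hm => ?_⟩
  have hu := continuous_dbarKernel n j cμ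
  have hv := continuous_dbarKernel n j cm
  have hu2 : Continuous fun z => ‖dbarKernel n j cμ z‖ ^ 2 := by fun_prop
  have hv2 : Continuous fun z => ‖dbarKernel n j cm z‖ ^ 2 := by fun_prop
  have hlower : ε * ∫ θ, ‖dbarKernel n j cμ (circlePt θ)‖ ^ 2 ∂m
      ≤ ∫ θ, ‖dbarKernel n j cμ (circlePt θ)‖ ^ 2 ∂μ :=
    mul_integral_le_of_smul_le hε.le hSteklov (fun θ => by positivity)
      (hu2.integrable_comp_circlePt μ)
  have hupper : 2 * ε * ∫ θ, ‖dbarKernel n j cμ (circlePt θ)‖ ^ 2 ∂μ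
      ≤ ε ^ 2 * ∫ θ, ‖dbarKernel n j cμ (circlePt θ)‖ ^ 2 ∂m
        + ∫ θ, ‖dbarKernel n j cm (circlePt θ)‖ ^ 2 ∂m := by
    have h := two_mul_re_integral_mul_conj_le ε (hu2.integrable_comp_circlePt m)
      (hv2.integrable_comp_circlePt m)
      ((hu.mul (continuous_star.comp hv)).integrable_comp_circlePt m)
    rwa [hμ.integral_dbarKernel_mul_conj_eq hm, Complex.ofReal_re] at h
  rw [inv_mul_eq_div, le_div_iff₀ hε]
  linarith [mul_le_mul_of_nonneg_left hlower hε.le]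

theorem kernel_derivative_norm_comparison
    (μ : Measure ℝ) [IsFiniteMeasure μ]
    (hsupp : μ (Set.Ioc 0 (2 * Real.pi))ᶜ = 0)
    (ε : ℝ) (hε : 0 < ε)
    (hSteklov : ENNReal.ofReal ε •
        ((ENNReal.ofReal (2 * Real.pi))⁻¹ • volume.restrict (Set.Ioc 0 (2 * Real.pi))) ≤ μ) :
    ∃ c : ℝ, ∀ n j : ℕ, j ≤ n → ∀ cμ cm : ℕ → ℕ → ℂ,
      IsRepKernel μ n cμ →
      IsRepKernel ((ENNReal.ofReal (2 * Real.pi))⁻¹ • volume.restrict (Set.Ioc 0 (2 * Real.pi))) n cm →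
      ∫ θ, ‖dbarKernel n j cμ (circlePt θ)‖ ^ 2 ∂μ ≤
        c * ∫ θ, ‖dbarKernel n j cm (circlePt θ)‖ ^ 2
              ∂((ENNReal.ofReal (2 * Real.pi))⁻¹ • volume.restrict (Set.Ioc 0 (2 * Real.pi))) :=
  kernel_derivative_norm_comparison_general μ ε hε hSteklov
end

section
/- Let h : ℕ → (0, ∞) be any positive sequence, fix integers n ≥ 10 and 1 ≤ j ≤ n/2, and let n_j = ⌊(1 − 1/(j+1)) n⌋. Define S(h) = ∑_{r=n_j}^{n} h(r) · ( (j!/2^j) ∑_{t_1=0}^{n_j−1} ∑_{t_2=0}^{t_1−1} ⋯ ∑_{t_j=0}^{t_{j-1}−1} ∏_{s=1}^{j} (1 + h(t_s)/h(t_{s-1})) )², with t_0 = n_j. Then S(h) · S(1/h) ≥ κ_j(n_j)^4 · (∑_{r=n_j}^{n} h(r)) · (∑_{r=n_j}^{n} 1/h(r)), where κ_j(r) = r!/(r−j)! for r ≥ j. -/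
/-!
Pair the iterated sum for `h` with the one for `1 / h` term by term: corresponding factors
multiply to `(1 + a) * (1 + a⁻¹) ≥ 4`. By induction on `j`, Cauchy–Schwarz on the outermost sum
and the hockey-stick identity give `G_j(h)(t) * G_j(1/h)(t) ≥ (2 ^ j * C(t, j)) ^ 2`, and
multiplying by `(j! / 2 ^ j) ^ 4` turns `(j! * C(t, j)) ^ 4` into `κ_j(t) ^ 4`.
-/

open Finset

theorem Nat.sum_range_choose_eq_choose_succ (j t : ℕ) :
    ∑ s ∈ range t, s.choose j = t.choose (j + 1) := by
  induction t with
  | zero => simp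
  | succ t ih => rw [sum_range_succ, ih, Nat.choose_succ_succ', add_comm]

theorem four_le_one_add_mul_one_add_inv {a : ℝ} (ha : 0 < a) : 4 ≤ (1 + a) * (1 + a⁻¹) := by
  have : (1 + a) * (1 + a⁻¹) = 4 + (a - 1) ^ 2 / a := by field_simp; ring
  rw [this]
  linarith [div_nonneg (sq_nonneg (a - 1)) ha.le]

noncomputable def iterSum (w : ℕ → ℝ) : ℕ → ℕ → ℝ
  | 0, _ => 1
  | j + 1, t₀ => ∑ t ∈ range t₀, (1 + w t / w t₀) * iterSum w j t

theorem eq_iterSum {G : (ℕ → ℝ) → ℕ → ℕ → ℝ} (hG0 : ∀ w t, G w 0 t = 1)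
    (hGs : ∀ w j t₀, G w (j + 1) t₀ = ∑ t ∈ range t₀, (1 + w t / w t₀) * G w j t)
    (w : ℕ → ℝ) (j t : ℕ) : G w j t = iterSum w j t := by
  induction j generalizing t with
  | zero => rw [hG0, iterSum]
  | succ j ih => simp only [hGs, iterSum, ih]

theorem iterSum_nonneg {w : ℕ → ℝ} (hw : ∀ k, 0 ≤ w k) (j t : ℕ) : 0 ≤ iterSum w j t := by
  induction j generalizing t with
  | zero => simp [iterSum]
  | succ j ih =>
    have := hw t
    exact sum_nonneg fun s _ => mul_nonneg (by have := hw s; positivity) (ih s)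

theorem sq_two_pow_mul_choose_le_iterSum_mul_iterSum_inv {w : ℕ → ℝ} (hw : ∀ k, 0 < w k)
    (j t : ℕ) :
    ((2 : ℝ) ^ j * t.choose j) ^ 2 ≤ iterSum w j t * iterSum (fun k => (w k)⁻¹) j t := by
  induction j generalizing t with
  | zero => simp [iterSum]
  | succ j ih =>
    have hw' : ∀ k, 0 ≤ (w k)⁻¹ := fun k => (inv_pos.2 (hw k)).le
    have hsum : (2 : ℝ) ^ (j + 1) * t.choose (j + 1) =
        ∑ s ∈ range t, (2 : ℝ) ^ (j + 1) * s.choose j := by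
      rw [← mul_sum, ← Nat.sum_range_choose_eq_choose_succ]
      push_cast
      rfl
    rw [hsum, iterSum, iterSum]
    refine sum_sq_le_sum_mul_sum_of_sq_le_mul _
      (fun s _ => mul_nonneg ?_ (iterSum_nonneg (fun k => (hw k).le) j s))
      (fun s _ => mul_nonneg ?_ (iterSum_nonneg hw' j s)) fun s _ => ?_
    · have := hw s; have := hw t; positivity
    · have := hw s; have := hw t; positivity
    · have hratio : (w s)⁻¹ / (w t)⁻¹ = (w s / w t)⁻¹ := by rw [inv_div, inv_div_inv]
      have hfour := four_le_one_add_mul_one_add_inv (div_pos (hw s) (hw t))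
      calc ((2 : ℝ) ^ (j + 1) * s.choose j) ^ 2 = 4 * ((2 : ℝ) ^ j * s.choose j) ^ 2 := by ring
        _ ≤ ((1 + w s / w t) * (1 + (w s / w t)⁻¹)) *
              (iterSum w j s * iterSum (fun k => (w k)⁻¹) j s) :=
          mul_le_mul hfour (ih s) (sq_nonneg _) (by linarith)
        _ = _ := by rw [hratio]; ring

theorem descFactorial_pow_four_le_iterSum_mul_iterSum_inv {w : ℕ → ℝ} (hw : ∀ k, 0 < w k)
    (j t : ℕ) :
    (t.descFactorial j : ℝ) ^ 4 ≤ ((j.factorial / 2 ^ j) * iterSum w j t) ^ 2 *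
      ((j.factorial / 2 ^ j) * iterSum (fun k => (w k)⁻¹) j t) ^ 2 := by
  have hprod := sq_two_pow_mul_choose_le_iterSum_mul_iterSum_inv hw j t
  calc (t.descFactorial j : ℝ) ^ 4
      = (((j.factorial : ℝ) / 2 ^ j) ^ 2 * ((2 : ℝ) ^ j * t.choose j) ^ 2) ^ 2 := by
        rw [Nat.descFactorial_eq_factorial_mul_choose]; push_cast; field_simp
    _ ≤ (((j.factorial : ℝ) / 2 ^ j) ^ 2 *
          (iterSum w j t * iterSum (fun k => (w k)⁻¹) j t)) ^ 2 := by gcongr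
    _ = _ := by ring

theorem core_product_estimate_general (h : ℕ → ℝ) (hpos : ∀ k, 0 < h k)
    (n j : ℕ)
    -- `G w j t₀` is the iterated sum `∑_{t_1 < t₀} ⋯ ∑_{t_j < t_{j-1}}
    -- ∏_{s=1}^{j} (1 + w(t_s)/w(t_{s-1}))`.
    (G : (ℕ → ℝ) → ℕ → ℕ → ℝ)
    (hG0 : ∀ w t, G w 0 t = 1)
    (hGs : ∀ w j' t₀, G w (j' + 1) t₀ = ∑ t ∈ Finset.range t₀, (1 + w t / w t₀) * G w j' t) :
    ((∑ r ∈ Finset.Icc (n * j / (j + 1)) n,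
          h r * (((j.factorial : ℝ) / 2 ^ j) * G h j (n * j / (j + 1))) ^ 2) *
        (∑ r ∈ Finset.Icc (n * j / (j + 1)) n,
          (h r)⁻¹ *
            (((j.factorial : ℝ) / 2 ^ j) * G (fun k => (h k)⁻¹) j (n * j / (j + 1))) ^ 2)) ≥
      (((n * j / (j + 1)).descFactorial j : ℝ)) ^ 4 *
        (∑ r ∈ Finset.Icc (n * j / (j + 1)) n, h r) *
        (∑ r ∈ Finset.Icc (n * j / (j + 1)) n, (h r)⁻¹) := by
  set t₀ := n * j / (j + 1)
  have hA : 0 ≤ ∑ r ∈ Icc t₀ n, h r := sum_nonneg fun r _ => (hpos r).le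
  have hB : 0 ≤ ∑ r ∈ Icc t₀ n, (h r)⁻¹ := sum_nonneg fun r _ => (inv_pos.2 (hpos r)).le
  have hkey := descFactorial_pow_four_le_iterSum_mul_iterSum_inv hpos j t₀
  simp only [← sum_mul, eq_iterSum hG0 hGs]
  calc (t₀.descFactorial j : ℝ) ^ 4 * (∑ r ∈ Icc t₀ n, h r) * ∑ r ∈ Icc t₀ n, (h r)⁻¹
      ≤ ((j.factorial / 2 ^ j) * iterSum h j t₀) ^ 2 *
          ((j.factorial / 2 ^ j) * iterSum (fun k => (h k)⁻¹) j t₀) ^ 2 *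
          (∑ r ∈ Icc t₀ n, h r) * ∑ r ∈ Icc t₀ n, (h r)⁻¹ := by gcongr
    _ = _ := by ring

theorem core_product_estimate (h : ℕ → ℝ) (hpos : ∀ k, 0 < h k)
    (n j : ℕ) (hn : 10 ≤ n) (hj : 1 ≤ j) (hjn : 2 * j ≤ n)
    -- `G w j t₀` is the iterated sum `∑_{t_1 < t₀} ⋯ ∑_{t_j < t_{j-1}}
    -- ∏_{s=1}^{j} (1 + w(t_s)/w(t_{s-1}))`.
    (G : (ℕ → ℝ) → ℕ → ℕ → ℝ)
    (hG0 : ∀ w t, G w 0 t = 1)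
    (hGs : ∀ w j' t₀, G w (j' + 1) t₀ = ∑ t ∈ Finset.range t₀, (1 + w t / w t₀) * G w j' t) :
    ((∑ r ∈ Finset.Icc (n * j / (j + 1)) n,
          h r * (((j.factorial : ℝ) / 2 ^ j) * G h j (n * j / (j + 1))) ^ 2) *
        (∑ r ∈ Finset.Icc (n * j / (j + 1)) n,
          (h r)⁻¹ *
            (((j.factorial : ℝ) / 2 ^ j) * G (fun k => (h k)⁻¹) j (n * j / (j + 1))) ^ 2)) ≥
      (((n * j / (j + 1)).descFactorial j : ℝ)) ^ 4 *
        (∑ r ∈ Finset.Icc (n * j / (j + 1)) n, h r) *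
        (∑ r ∈ Finset.Icc (n * j / (j + 1)) n, (h r)⁻¹) :=
  core_product_estimate_general h hpos n j G hG0 hGs
end

section
/- Let h : ℕ → (0,∞) and suppose there is a constant C such that for all pairs (n, ℓ) with either ℓ = 0 or ℓ = ⌊(1 − 1/(j+1)) n⌋ for some integer 1 ≤ j ≤ n/2, one has ( (1/(n−ℓ)) ∑_{k=ℓ}^{n} h(k) ) · ( (1/(n−ℓ)) ∑_{k=ℓ}^{n} 1/h(k) ) ≤ C. Then there is a constant C' such that the same bound with C' holds for all integers n > ℓ ≥ 0. -/
/-!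
Given `ℓ < n`, put `m = n - ℓ`. If `2m > n` the pair `(n, 0)` already has `n ≤ 2m`. Otherwise
`j = ⌊n / 2m⌋` satisfies `m (j+1) ≤ n < 2m (j+1)`, so `ℓ* = ⌊n j / (j+1)⌋ = n - ⌈n / (j+1)⌉`
lies in `[n - 2m, ℓ]`. Enlarging `[ℓ, n]` to `[ℓ*, n]` can only increase the sums of the positive
functions `h` and `1/h`, while the normalising length grows by a factor at most `2`; hence `C' = 4C`.
-/

open Finset

namespace Nat

theorem mul_div_succ_le_sub {n m j : ℕ} (h : m * (j + 1) ≤ n) : n * j / (j + 1) ≤ n - m := by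
  refine Nat.div_le_of_le_mul ?_
  zify [(by nlinarith : m ≤ n)]
  nlinarith

theorem sub_mul_div_succ_le {n c j : ℕ} (h : n ≤ c * (j + 1)) : n - n * j / (j + 1) ≤ c := by
  suffices n - c ≤ n * j / (j + 1) by omega
  rw [Nat.le_div_iff_mul_le j.succ_pos]
  rcases le_total n c with hnc | hcn
  · simp [Nat.sub_eq_zero_of_le hnc]
  · zify [hcn]
    nlinarith

end Nat

def IsSpecialPair (n ℓ : ℕ) : Prop :=
  (ℓ = 0 ∧ 1 ≤ n) ∨ ∃ j : ℕ, 1 ≤ j ∧ 2 * j ≤ n ∧ ℓ = n * j / (j + 1)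

theorem exists_isSpecialPair_le {n ℓ : ℕ} (hℓ : ℓ < n) :
    ∃ ℓ', ℓ' ≤ ℓ ∧ IsSpecialPair n ℓ' ∧ n - ℓ' ≤ 2 * (n - ℓ) := by
  set m := n - ℓ
  by_cases hsmall : n < 2 * m
  · exact ⟨0, Nat.zero_le _, Or.inl ⟨rfl, by omega⟩, by omega⟩
  set j := n / (2 * m)
  have hm : 0 < 2 * m := by omega
  have hj : 1 ≤ j := (Nat.le_div_iff_mul_le hm).2 (by omega)
  have hjm : j * (2 * m) ≤ n := Nat.div_mul_le_self n (2 * m)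
  have hlow : m * (j + 1) ≤ n := by nlinarith
  have hhigh : n ≤ 2 * m * (j + 1) := (Nat.lt_mul_div_succ n hm).le
  refine ⟨n * j / (j + 1), by have := Nat.mul_div_succ_le_sub hlow; omega,
    Or.inr ⟨j, hj, ?_, rfl⟩, Nat.sub_mul_div_succ_le hhigh⟩
  nlinarith [show 1 ≤ m by omega]

-- As in the paper, the normalisation is `n - ℓ` although the sum has `n - ℓ + 1` terms.
noncomputable def intervalAvg (f : ℕ → ℝ) (ℓ n : ℕ) : ℝ :=
  1 / ((n : ℝ) - ℓ) * ∑ k ∈ Icc ℓ n, f k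

theorem intervalAvg_le_mul_intervalAvg {f : ℕ → ℝ} (hf : ∀ k, 0 ≤ f k) {ℓ' ℓ n : ℕ} {c : ℝ}
    (hℓ' : ℓ' ≤ ℓ) (hℓ : ℓ < n) (hlen : (n : ℝ) - ℓ' ≤ c * ((n : ℝ) - ℓ)) :
    intervalAvg f ℓ n ≤ c * intervalAvg f ℓ' n := by
  have hd : (0 : ℝ) < n - ℓ := sub_pos.2 (by exact_mod_cast hℓ)
  have hd' : (0 : ℝ) < n - ℓ' := sub_pos.2 (by exact_mod_cast hℓ'.trans_lt hℓ)
  have hsum : ∑ k ∈ Icc ℓ n, f k ≤ ∑ k ∈ Icc ℓ' n, f k :=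
    sum_le_sum_of_subset_of_nonneg (Icc_subset_Icc_left hℓ') fun k _ _ ↦ hf k
  have hc : 0 < c := pos_of_mul_pos_left (hd'.trans_le hlen) hd.le
  have hinv : 1 / ((n : ℝ) - ℓ) ≤ c * (1 / ((n : ℝ) - ℓ')) := by
    rw [← mul_div_assoc, div_le_div_iff₀ hd hd']
    linarith
  unfold intervalAvg
  rw [← mul_assoc]
  exact mul_le_mul hinv hsum (sum_nonneg fun k _ ↦ hf k) (by positivity)

theorem intervalAvg_nonneg {f : ℕ → ℝ} (hf : ∀ k, 0 ≤ f k) {ℓ n : ℕ} (hℓ : ℓ ≤ n) :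
    0 ≤ intervalAvg f ℓ n :=
  mul_nonneg (by simp [hℓ]) (sum_nonneg fun k _ ↦ hf k)

theorem muckenhoupt_from_special_pairs (h : ℕ → ℝ) (hpos : ∀ k, 0 < h k) (C : ℝ)
    (hC : ∀ n ℓ : ℕ,
      ((ℓ = 0 ∧ 1 ≤ n) ∨ ∃ j : ℕ, 1 ≤ j ∧ 2 * j ≤ n ∧ ℓ = n * j / (j + 1)) →
      ((1 / ((n : ℝ) - ℓ)) * ∑ k ∈ Finset.Icc ℓ n, h k) *
        ((1 / ((n : ℝ) - ℓ)) * ∑ k ∈ Finset.Icc ℓ n, (h k)⁻¹) ≤ C) :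
    ∃ C' : ℝ, ∀ n ℓ : ℕ, ℓ < n →
      ((1 / ((n : ℝ) - ℓ)) * ∑ k ∈ Finset.Icc ℓ n, h k) *
        ((1 / ((n : ℝ) - ℓ)) * ∑ k ∈ Finset.Icc ℓ n, (h k)⁻¹) ≤ C' := by
  refine ⟨4 * C, fun n ℓ hℓ ↦ ?_⟩
  obtain ⟨ℓ', hℓ', hspecial, hlen⟩ := exists_isSpecialPair_le hℓ
  have hlen' : (n : ℝ) - ℓ' ≤ 2 * ((n : ℝ) - ℓ) := by
    rw [← Nat.cast_sub (hℓ'.trans hℓ.le), ← Nat.cast_sub hℓ.le]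
    exact_mod_cast hlen
  have hh : ∀ k, 0 ≤ h k := fun k ↦ (hpos k).le
  have hh' : ∀ k, 0 ≤ (h k)⁻¹ := fun k ↦ (inv_pos.2 (hpos k)).le
  change intervalAvg h ℓ n * intervalAvg (fun k ↦ (h k)⁻¹) ℓ n ≤ 4 * C
  calc intervalAvg h ℓ n * intervalAvg (fun k ↦ (h k)⁻¹) ℓ n
      ≤ (2 * intervalAvg h ℓ' n) * (2 * intervalAvg (fun k ↦ (h k)⁻¹) ℓ' n) :=
        mul_le_mul (intervalAvg_le_mul_intervalAvg hh hℓ' hℓ hlen')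
          (intervalAvg_le_mul_intervalAvg hh' hℓ' hℓ hlen')
          (intervalAvg_nonneg hh' hℓ.le)
          (mul_nonneg zero_le_two (intervalAvg_nonneg hh (hℓ'.trans hℓ.le)))
    _ = 4 * (intervalAvg h ℓ' n * intervalAvg (fun k ↦ (h k)⁻¹) ℓ' n) := by ring
    _ ≤ 4 * C := mul_le_mul_of_nonneg_left (hC n ℓ' hspecial) (by norm_num)
end

section
/- Let (α_k)_{k≥0} be a sequence of reals with |α_k| < 1 and ∑_k α_k² < ∞, and let s_n = α_0 + ⋯ + α_n, h(n) = ∏_{k=0}^{n-1}(1−α_k)/(1+α_k). If sup_{n>ℓ≥0} ( (1/(n−ℓ)) ∑_{k=ℓ}^{n-1} h(k) ) · ( (1/(n−ℓ)) ∑_{k=ℓ}^{n-1} 1/h(k) ) < ∞, then sup_{n>ℓ≥0} ( (1/(n−ℓ)) ∑_{k=ℓ}^{n-1} e^{2 s_k} ) · ( (1/(n−ℓ)) ∑_{k=ℓ}^{n-1} e^{−2 s_k} ) < ∞. -/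
/-!
Write `b j = log((1 + α j)/(1 - α j)) - 2 α j`, so that `|b j| ≤ 4 (α j)²` once `|α j| ≤ 1/2`;
hence `b` is absolutely summable. Since `log h(k) = -∑_{j<k} (2 α j + b j)`, we get
`2 s_k + log h(k) = 2 α k - ∑_{j<k} b j`, which is bounded by `A = 2 + ∑ |b j|`. Thus
`e^{2 s_k} ≤ e^A / h(k)` and `e^{-2 s_k} ≤ e^A h(k)`, and the Muckenhoupt product for `e^{2s}`
is at most `e^{2A}` times the one for `h`.
-/

open Finset

lemma Real.abs_log_div_sub_two_mul_le {x : ℝ} (hx : |x| ≤ 1 / 2) :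
    |Real.log ((1 + x) / (1 - x)) - 2 * x| ≤ 4 * x ^ 2 := by
  have hx1 : |x| < 1 := hx.trans_lt (by norm_num)
  obtain ⟨hneg, hpos⟩ := abs_lt.1 hx1
  have hminus : |x + Real.log (1 - x)| ≤ x ^ 2 / (1 - |x|) := by
    simpa using Real.abs_log_sub_add_sum_range_le hx1 1
  have hplus : |-x + Real.log (1 + x)| ≤ x ^ 2 / (1 - |x|) := by
    simpa using Real.abs_log_sub_add_sum_range_le (x := -x) (by rwa [abs_neg]) 1
  have htail : x ^ 2 / (1 - |x|) ≤ 2 * x ^ 2 := by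
    rw [div_le_iff₀ (by linarith)]
    nlinarith [abs_nonneg x, sq_nonneg x]
  rw [Real.log_div (by linarith) (by linarith)]
  calc |Real.log (1 + x) - Real.log (1 - x) - 2 * x|
      = |(-x + Real.log (1 + x)) - (x + Real.log (1 - x))| := by ring_nf
    _ ≤ |-x + Real.log (1 + x)| + |x + Real.log (1 - x)| := abs_sub _ _
    _ ≤ 2 * x ^ 2 + 2 * x ^ 2 := add_le_add (hplus.trans htail) (hminus.trans htail)
    _ = 4 * x ^ 2 := by ring

lemma summable_abs_log_div_sub_two_mul {α : ℕ → ℝ} (hsum : Summable fun k => α k ^ 2) :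
    Summable fun k => |Real.log ((1 + α k) / (1 - α k)) - 2 * α k| := by
  refine Summable.of_norm_bounded_eventually_nat (hsum.mul_left 4) ?_
  filter_upwards [hsum.tendsto_atTop_zero.eventually_le_const
    (show (0 : ℝ) < (1 / 2) ^ 2 by norm_num)] with k hk
  rw [Real.norm_eq_abs, abs_abs]
  exact Real.abs_log_div_sub_two_mul_le (abs_le_of_sq_le_sq hk (by norm_num))

lemma one_sub_div_one_add_pos {x : ℝ} (hx : |x| < 1) : 0 < (1 - x) / (1 + x) := by
  obtain ⟨hneg, hpos⟩ := abs_lt.1 hx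
  exact div_pos (by linarith) (by linarith)

lemma two_mul_sum_add_log_prod_eq {α : ℕ → ℝ} (hα : ∀ k, |α k| < 1) (k : ℕ) :
    2 * ∑ j ∈ range (k + 1), α j + Real.log (∏ j ∈ range k, (1 - α j) / (1 + α j)) =
      2 * α k - ∑ j ∈ range k, (Real.log ((1 + α j) / (1 - α j)) - 2 * α j) := by
  have hfactor : ∀ j ∈ range k, (1 - α j) / (1 + α j) ≠ 0 :=
    fun j _ => (one_sub_div_one_add_pos (hα j)).ne'
  have hflip : ∀ j, Real.log ((1 - α j) / (1 + α j)) = -Real.log ((1 + α j) / (1 - α j)) :=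
    fun j => by rw [← Real.log_inv, inv_div]
  simp only [Real.log_prod hfactor, hflip, sum_neg_distrib, sum_range_succ, sum_sub_distrib,
    ← mul_sum]
  ring

lemma exists_abs_two_mul_sum_add_log_prod_le {α : ℕ → ℝ} (hα : ∀ k, |α k| < 1)
    (hsum : Summable fun k => α k ^ 2) :
    ∃ A, ∀ k, |2 * ∑ j ∈ range (k + 1), α j +
      Real.log (∏ j ∈ range k, (1 - α j) / (1 + α j))| ≤ A := by
  set b : ℕ → ℝ := fun j => Real.log ((1 + α j) / (1 - α j)) - 2 * α j
  have hb : Summable fun j => |b j| := summable_abs_log_div_sub_two_mul hsum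
  refine ⟨2 + ∑' j, |b j|, fun k => ?_⟩
  rw [two_mul_sum_add_log_prod_eq hα]
  have hα2 : |2 * α k| ≤ 2 := by
    rw [abs_mul, abs_two]; linarith [hα k]
  calc |2 * α k - ∑ j ∈ range k, b j| ≤ |2 * α k| + ∑ j ∈ range k, |b j| :=
        (abs_sub _ _).trans (add_le_add_right (abs_sum_le_sum_abs _ _) _)
    _ ≤ 2 + ∑' j, |b j| :=
        add_le_add hα2 (hb.sum_le_tsum _ fun j _ => abs_nonneg _)

lemma Real.exp_le_and_exp_neg_le_of_abs_add_log_le {x y A : ℝ} (hx : 0 < x)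
    (h : |y + Real.log x| ≤ A) :
    Real.exp y ≤ Real.exp A * x⁻¹ ∧ Real.exp (-y) ≤ Real.exp A * x := by
  obtain ⟨hlow, hup⟩ := abs_le.1 h
  constructor
  · rw [← Real.exp_log hx, ← Real.exp_neg, ← Real.exp_add, Real.exp_le_exp]
    linarith
  · rw [← Real.exp_log hx, ← Real.exp_add, Real.exp_le_exp]
    linarith

lemma mul_sum_mul_mul_sum_le {ι : Type*} (S : Finset ι) {a c : ℝ} (ha : 0 ≤ a)
    {u v w w' : ι → ℝ} (hu : ∀ k ∈ S, 0 ≤ u k) (hv : ∀ k ∈ S, 0 ≤ v k)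
    (huw : ∀ k ∈ S, u k ≤ c * w k) (hvw : ∀ k ∈ S, v k ≤ c * w' k) :
    (a * ∑ k ∈ S, u k) * (a * ∑ k ∈ S, v k) ≤
      c ^ 2 * ((a * ∑ k ∈ S, w k) * (a * ∑ k ∈ S, w' k)) := by
  calc (a * ∑ k ∈ S, u k) * (a * ∑ k ∈ S, v k)
      ≤ (a * ∑ k ∈ S, c * w k) * (a * ∑ k ∈ S, c * w' k) :=
        mul_le_mul (mul_le_mul_of_nonneg_left (sum_le_sum huw) ha)
          (mul_le_mul_of_nonneg_left (sum_le_sum hvw) ha) (mul_nonneg ha (sum_nonneg hv))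
          (mul_nonneg ha (sum_nonneg fun k hk => (hu k hk).trans (huw k hk)))
    _ = c ^ 2 * ((a * ∑ k ∈ S, w k) * (a * ∑ k ∈ S, w' k)) := by
        simp only [← mul_sum]; ring

theorem muckenhoupt_transfer (α : ℕ → ℝ) (hα : ∀ k, |α k| < 1)
    (hsum : Summable fun k => (α k) ^ 2)
    (s : ℕ → ℝ) (hs : ∀ n, s n = ∑ k ∈ Finset.range (n + 1), α k)
    (h : ℕ → ℝ) (hh : ∀ n, h n = ∏ k ∈ Finset.range n, (1 - α k) / (1 + α k))
    (hyp : ∃ C : ℝ, ∀ ℓ n : ℕ, ℓ < n →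
      ((1 / ((n : ℝ) - ℓ)) * ∑ k ∈ Finset.Ico ℓ n, h k) *
        ((1 / ((n : ℝ) - ℓ)) * ∑ k ∈ Finset.Ico ℓ n, (h k)⁻¹) ≤ C) :
    ∃ C : ℝ, ∀ ℓ n : ℕ, ℓ < n →
      ((1 / ((n : ℝ) - ℓ)) * ∑ k ∈ Finset.Ico ℓ n, Real.exp (2 * s k)) *
        ((1 / ((n : ℝ) - ℓ)) * ∑ k ∈ Finset.Ico ℓ n, Real.exp (-2 * s k)) ≤ C := by
  obtain ⟨C, hC⟩ := hyp
  obtain ⟨A, hA⟩ := exists_abs_two_mul_sum_add_log_prod_le hα hsum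
  have hpos : ∀ k, 0 < h k := fun k => by
    rw [hh k]
    exact prod_pos fun j _ => one_sub_div_one_add_pos (hα j)
  have hcomp : ∀ k, Real.exp (2 * s k) ≤ Real.exp A * (h k)⁻¹ ∧
      Real.exp (-2 * s k) ≤ Real.exp A * h k := fun k => by
    rw [neg_mul]
    exact Real.exp_le_and_exp_neg_le_of_abs_add_log_le (hpos k) (by rw [hs, hh]; exact hA k)
  refine ⟨Real.exp A ^ 2 * C, fun ℓ n hℓn => ?_⟩
  have hlen : (0 : ℝ) ≤ 1 / ((n : ℝ) - ℓ) := by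
    have : (ℓ : ℝ) < n := by exact_mod_cast hℓn
    exact one_div_nonneg.2 (by linarith)
  calc _ ≤ Real.exp A ^ 2 * (((1 / ((n : ℝ) - ℓ)) * ∑ k ∈ Ico ℓ n, (h k)⁻¹) *
          ((1 / ((n : ℝ) - ℓ)) * ∑ k ∈ Ico ℓ n, h k)) :=
        mul_sum_mul_mul_sum_le _ hlen (fun k _ => (Real.exp_pos _).le)
          (fun k _ => (Real.exp_pos _).le) (fun k _ => (hcomp k).1) (fun k _ => (hcomp k).2)
    _ ≤ Real.exp A ^ 2 * C := by
        rw [mul_comm (_ * _)]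
        exact mul_le_mul_of_nonneg_left (hC ℓ n hℓn) (by positivity)
end
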